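/- Accumulated drift of noisy asynchronous updates: let ε ≥ 0, let (σ_k) be a sequence of states, and for each k let F̃_k be a noisy asynchronous update, i.e., a map on vectors such that for every W : S → ℝ, (F̃_k W)(σ_k) = (T W)(σ_k) + w̃_k(W) with |w̃_k(W)| ≤ ε and (F̃_k W)(s) = W(s) for s ≠ σ_k. Then for all indices k ≤ k' and every vector V : S → ℝ, ‖(F̃_{k'−1} ∘ ⋯ ∘ F̃_k) V − (F_{σ_{k'−1}} ∘ ⋯ ∘ F_{σ_k}) V‖∞ ≤ (k' − k) · ε. -/
import Mathlib


open Finset Filter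

noncomputable def supNorm {S : Type*} [Fintype S] [Nonempty S] (V : S → ℝ) : ℝ :=
  Finset.univ.sup' Finset.univ_nonempty fun s => |V s|

noncomputable def bellmanT {S A : Type*} [Fintype S] [Fintype A] [Nonempty A]
    (P R : S → A → S → ℝ) (γ : ℝ) (V : S → ℝ) : S → ℝ :=
  fun s => Finset.univ.sup' Finset.univ_nonempty
    fun a => ∑ s', P s a s' * (R s a s' + γ * V s')


noncomputable def asyncF {S A : Type*} [Fintype S] [Nonempty S] [DecidableEq S]
    [Fintype A] [Nonempty A]
    (P R : S → A → S → ℝ) (γ : ℝ) (σ : S) (V : S → ℝ) : S → ℝ :=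
  fun s => if s = σ then bellmanT P R γ V s else V s


noncomputable def iterGen {S : Type*} (G : ℕ → (S → ℝ) → S → ℝ) (k : ℕ) :
    ℕ → (S → ℝ) → S → ℝ
  | 0, V => V
  | m + 1, V => G (k + m) (iterGen G k m V)


lemma supNorm_apply_le {S : Type*} [Fintype S] [Nonempty S] (V : S → ℝ) (s : S) :
    |V s| ≤ supNorm V := Finset.le_sup' (fun s => |V s|) (Finset.mem_univ s)

lemma supNorm_le {S : Type*} [Fintype S] [Nonempty S] (V : S → ℝ) (c : ℝ)
    (h : ∀ s, |V s| ≤ c) : supNorm V ≤ c :=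
  Finset.sup'_le _ _ fun s _ => h s

lemma abs_sup'_sub_sup'_le {α : Type*} (t : Finset α) (ht : t.Nonempty) (f g : α → ℝ)
    (c : ℝ) (h : ∀ a ∈ t, |f a - g a| ≤ c) : |t.sup' ht f - t.sup' ht g| ≤ c := by
  rw [abs_sub_le_iff]
  constructor
  · rw [sub_le_iff_le_add]
    apply Finset.sup'_le; intro a ha
    have h1 := (abs_sub_le_iff.mp (h a ha)).1
    have h2 : g a ≤ t.sup' ht g := Finset.le_sup' _ ha
    linarith
  · rw [sub_le_iff_le_add]
    apply Finset.sup'_le; intro a ha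
    have h1 := (abs_sub_le_iff.mp (h a ha)).2
    have h2 : f a ≤ t.sup' ht f := Finset.le_sup' _ ha
    linarith

lemma bellmanT_lipschitz {S A : Type*} [Fintype S] [Nonempty S] [Fintype A] [Nonempty A]
    (P R : S → A → S → ℝ) (hP0 : ∀ s a s', 0 ≤ P s a s') (hP1 : ∀ s a, ∑ s', P s a s' = 1)
    (γ : ℝ) (hγ0 : 0 ≤ γ) (V W : S → ℝ) (s : S) :
    |bellmanT P R γ V s - bellmanT P R γ W s| ≤ γ * supNorm (V - W) := by
  apply abs_sup'_sub_sup'_le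
  intro a _
  rw [← Finset.sum_sub_distrib]
  calc |∑ s', (P s a s' * (R s a s' + γ * V s') - P s a s' * (R s a s' + γ * W s'))|
      ≤ ∑ s', |P s a s' * (R s a s' + γ * V s') - P s a s' * (R s a s' + γ * W s')| :=
        Finset.abs_sum_le_sum_abs _ _
    _ = ∑ s', P s a s' * (γ * |V s' - W s'|) := by
        apply Finset.sum_congr rfl; intro s' _
        have : P s a s' * (R s a s' + γ * V s') - P s a s' * (R s a s' + γ * W s')
            = P s a s' * (γ * (V s' - W s')) := by ring
        rw [this, abs_mul, abs_mul, abs_of_nonneg (hP0 s a s'), abs_of_nonneg hγ0]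
    _ ≤ ∑ s', P s a s' * (γ * supNorm (V - W)) := by
        apply Finset.sum_le_sum; intro s' _
        exact mul_le_mul_of_nonneg_left (mul_le_mul_of_nonneg_left
          (supNorm_apply_le (V - W) s') hγ0) (hP0 s a s')
    _ = γ * supNorm (V - W) := by rw [← Finset.sum_mul, hP1]; ring

lemma supNorm_nonneg {S : Type*} [Fintype S] [Nonempty S] (V : S → ℝ) : 0 ≤ supNorm V :=
  le_trans (abs_nonneg _) (supNorm_apply_le V (Classical.arbitrary S))

theorem noisy_async_accumulated_drift (n : ℕ) [NeZero n] (A : Type*) [Fintype A] [Nonempty A]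
    (P R : Fin n → A → Fin n → ℝ)
    (hP0 : ∀ s a s', 0 ≤ P s a s') (hP1 : ∀ s a, ∑ s', P s a s' = 1)
    (γ : ℝ) (hγ0 : 0 ≤ γ) (hγ1 : γ < 1)
    (ε : ℝ) (hε : 0 ≤ ε) (σ : ℕ → Fin n)
    (Ft : ℕ → (Fin n → ℝ) → Fin n → ℝ) (wt : ℕ → (Fin n → ℝ) → ℝ)
    (hFt1 : ∀ k (W : Fin n → ℝ), Ft k W (σ k) = bellmanT P R γ W (σ k) + wt k W)
    (hwt : ∀ k (W : Fin n → ℝ), |wt k W| ≤ ε)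
    (hFt2 : ∀ k (W : Fin n → ℝ) s, s ≠ σ k → Ft k W s = W s) :
    ∀ (k k' : ℕ), k ≤ k' → ∀ V : Fin n → ℝ,
      supNorm (iterGen Ft k (k' - k) V -
          iterGen (fun j => asyncF P R γ (σ j)) k (k' - k) V) ≤
        ((k' - k : ℕ) : ℝ) * ε := by
  have key : ∀ m k (V : Fin n → ℝ),
      supNorm (iterGen Ft k m V - iterGen (fun j => asyncF P R γ (σ j)) k m V)
        ≤ (m : ℝ) * ε := by
    intro m
    induction m with
    | zero =>
      intro k V
      simp only [iterGen, sub_self, Nat.cast_zero, zero_mul]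
      apply supNorm_le
      intro s
      simp
    | succ m ih =>
      intro k V
      set Wt := iterGen Ft k m V with hWt
      set W := iterGen (fun j => asyncF P R γ (σ j)) k m V with hW
      have hprev : supNorm (Wt - W) ≤ (m : ℝ) * ε := ih k V
      have hN : 0 ≤ supNorm (Wt - W) := supNorm_nonneg _
      apply supNorm_le
      intro s
      have hiter : (iterGen Ft k (m+1) V - iterGen (fun j => asyncF P R γ (σ j)) k (m+1) V) s
          = Ft (k+m) Wt s - asyncF P R γ (σ (k+m)) W s := rfl
      rw [hiter]
      by_cases hs : s = σ (k + m)
      · have hT := bellmanT_lipschitz P R hP0 hP1 γ hγ0 Wt W s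
        have hw := hwt (k+m) Wt
        rw [hs, hFt1]
        have : asyncF P R γ (σ (k+m)) W (σ (k+m)) = bellmanT P R γ W (σ (k+m)) := by
          simp [asyncF]
        rw [this]
        have hTs := bellmanT_lipschitz P R hP0 hP1 γ hγ0 Wt W (σ (k+m))
        calc |bellmanT P R γ Wt (σ (k+m)) + wt (k+m) Wt - bellmanT P R γ W (σ (k+m))|
            ≤ |bellmanT P R γ Wt (σ (k+m)) - bellmanT P R γ W (σ (k+m))| + |wt (k+m) Wt| := by
              have := abs_add_le (bellmanT P R γ Wt (σ (k+m)) - bellmanT P R γ W (σ (k+m)))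
                (wt (k+m) Wt)
              calc _ = |bellmanT P R γ Wt (σ (k+m)) - bellmanT P R γ W (σ (k+m)) + wt (k+m) Wt| := by ring_nf
                _ ≤ _ := this
          _ ≤ γ * supNorm (Wt - W) + ε := add_le_add hTs hw
          _ ≤ supNorm (Wt - W) + ε := by nlinarith
          _ ≤ (m : ℝ) * ε + ε := by linarith
          _ ≤ ((m + 1 : ℕ) : ℝ) * ε := by push_cast; ring_nf; rfl
      · rw [hFt2 _ _ _ hs]
        have : asyncF P R γ (σ (k+m)) W s = W s := by simp [asyncF, hs]
        rw [this]
        have := supNorm_apply_le (Wt - W) s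
        simp only [Pi.sub_apply] at this
        calc |Wt s - W s| ≤ supNorm (Wt - W) := this
          _ ≤ (m : ℝ) * ε := hprev
          _ ≤ ((m + 1 : ℕ) : ℝ) * ε := by push_cast; nlinarith
  intro k k' _ V
  exact key (k' - k) k V
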